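/- If |S| ≥ 1, the root of CT(S) stores S[i] where i is the unique index such that S[i] ≤ S[j] for all j and S[h] > S[i] for all h < i; moreover, for all j > i, PD(S)[j] ≠ 0. -/

import Mathlib

open List

inductive Shape where
  | nil : Shape
  | node : Shape → Shape → Shape
deriving DecidableEq

inductive BTree (α : Type*) where
  | nil : BTree α
  | node : BTree α → α → BTree α → BTree α

def BTree.shape {α : Type*} : BTree α → Shape
  | .nil => .nil
  | .node l _ r => .node l.shape r.shape

def BTree.rootVal {α : Type*} : BTree α → Option α
  | .nil => none
  | .node _ v _ => some v

section
variable {α : Type*} [LinearOrder α] [Inhabited α]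

/-- Parent-distance value at 1-based position `i` of `S`. -/
def pdVal (S : List α) (i : ℕ) : ℕ :=
  let J := (Finset.Ico 1 i).filter (fun j => S.getD (j-1) default ≤ S.getD (i-1) default)
  if h : J.Nonempty then i - J.max' h else 0

/-- Parent-distance encoding of `S` (1-based positions). -/
def PD (S : List α) : List ℕ := (List.range S.length).map (fun k => pdVal S (k+1))

/-- 0-based index of the leftmost minimum of `S`. -/
def leftmostMinIdx (S : List α) : ℕ :=
  ((List.range S.length).argmin (fun j => S.getD j default)).getD 0

def CTaux : ℕ → List α → BTree α
  | 0, _ => .nil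
  | (n+1), S =>
    if S.isEmpty then .nil else
      let i := leftmostMinIdx S
      .node (CTaux n (S.take i)) (S.getD i default) (CTaux n (S.drop (i+1)))

/-- The (labeled) Cartesian tree of `S`. -/
def CT (S : List α) : BTree α := CTaux S.length S

/-- Front pointers of a sequence `u` of naturals (1-based positions `k ≥ 2` with `k - u[k] = 1`). -/
def frontPointers (u : List ℕ) : Finset ℕ :=
  (Finset.Icc 2 u.length).filter (fun k => k - u.getD (k-1) 0 = 1)

/-- `FP(S)[i]`: number of front pointers of `PD(S[i..])` (1-based `i`). -/
def FPval (S : List α) (i : ℕ) : ℕ := (frontPointers (PD (S.drop (i-1)))).card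

/-- The FP encoding of `S`. -/
def FP (S : List α) : List ℕ := (List.range S.length).map (fun k => FPval S (k+1))

end


private theorem indexOf_range {n m : ℕ} (h : m < n) : (List.range n).idxOf m = m := by
  induction n with
  | zero => omega
  | succ k ih =>
    rw [List.range_succ]
    rcases Nat.lt_or_ge m k with h'|h'
    · rw [List.idxOf_append_of_mem (by simpa using h'), ih h']
    · have : m = k := by omega
      subst this
      rw [List.idxOf_append_of_notMem (by simp), List.length_range]
      simp

/-- The root of `CT(S)` stores the leftmost minimum `S[i]`, and `PD(S)[j] ≠ 0`
for every `j > i`. -/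
theorem stmt18 {α : Type*} [LinearOrder α] [Inhabited α] (S : List α) (hS : S ≠ [])
    (i : ℕ) (hi1 : 1 ≤ i) (hi2 : i ≤ S.length)
    (hmin : ∀ j, 1 ≤ j → j ≤ S.length → S.getD (i-1) default ≤ S.getD (j-1) default)
    (hleft : ∀ h, 1 ≤ h → h < i → S.getD (i-1) default < S.getD (h-1) default) :
    (CT S).rootVal = some (S.getD (i-1) default) ∧
    (∀ j, i < j → j ≤ S.length → pdVal S j ≠ 0):= by
  have hlen : 1 ≤ S.length := List.length_pos_iff.mpr hS
  have hargmin : (List.range S.length).argmin (fun j => S.getD j default) = some (i-1) := by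
    rw [List.argmin_eq_some_iff]
    refine ⟨by simp; omega, ?_, ?_⟩
    · intro a ha
      simp only [List.mem_range] at ha
      have := hmin (a+1) (by omega) (by omega)
      simpa using this
    · intro a ha hle
      simp only [List.mem_range] at ha
      rw [indexOf_range (by omega), indexOf_range ha]
      by_contra hcon
      push_neg at hcon
      have := hleft (a+1) (by omega) (by omega)
      simp only [Nat.add_sub_cancel] at this
      exact absurd hle (not_le.mpr this)
  have hidx : leftmostMinIdx S = i - 1 := by
    rw [leftmostMinIdx, hargmin]; rfl
  constructor
  · obtain ⟨n, hn⟩ : ∃ n, S.length = n + 1 := ⟨S.length - 1, by omega⟩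
    rw [CT, hn, CTaux]
    simp only [List.isEmpty_iff]
    rw [if_neg hS, hidx]
    rfl
  · intro j hij hj
    rw [pdVal]
    have hiJ : i ∈ (Finset.Ico 1 j).filter
        (fun k => S.getD (k-1) default ≤ S.getD (j-1) default) := by
      simp only [Finset.mem_filter, Finset.mem_Ico]
      exact ⟨⟨hi1, hij⟩, hmin j (by omega) hj⟩
    have hne : ((Finset.Ico 1 j).filter
        (fun k => S.getD (k-1) default ≤ S.getD (j-1) default)).Nonempty := ⟨i, hiJ⟩
    rw [dif_pos hne]
    have hmax := Finset.max'_mem _ hne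
    simp only [Finset.mem_filter, Finset.mem_Ico] at hmax
    omega
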